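/- Let U : ℝ → ℝ be continuous, symmetric (U(−s) = U(s)) and satisfy (A0), and let β > 0. Let Λ_even ⊂ E^d be finite, let Λ = Λ_even ∪ {x + e_i : x ∈ Λ_even, i ∈ I} be its associated set, and Λ_odd = Λ ∩ O^d. Then for every boundary condition ψ : ℤ^d → ℝ, the pushforward of the finite-volume Gibbs measure ν_{Λ,ψ} under the restriction map φ ↦ (φ(x))_{x∈E^d} is the probability measure on ℝ^{E^d} under which φ(x) = ψ(x) for x ∈ E^d∖Λ_even and the coordinates (φ(x))_{x∈Λ_even} have joint density proportional to exp( − Σ_{x∈Λ_odd} F_x( (φ(x+e_i))_{i∈I} ) ), where F_x( (a_i)_{i∈I} ) = −log ∫_ℝ exp( −2β Σ_{i∈I} U(a_i − t) ) dt. -/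

import Mathlib

open MeasureTheory Real Filter

noncomputable section
open scoped Classical

/-- The lattice `ℤ^d`. -/
abbrev LatZ (d : ℕ) : Type := Fin d → ℤ

/-- The `2d` signed unit vectors `e_i, -e_i` of `ℤ^d`, indexed by `Fin d × Bool`. -/
def dirv (d : ℕ) (p : Fin d × Bool) : LatZ d :=
  if p.2 then Pi.single p.1 1 else -Pi.single p.1 1

/-- Even sites of `ℤ^d`. -/
abbrev Esites (d : ℕ) : Type := {x : LatZ d // Even (∑ i, x i)}

/-- The set `Λ` associated to a finite set `Λ_even` of even sites:
`Λ = Λ_even ∪ {x + e_i : x ∈ Λ_even, i ∈ I}`. -/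
def assocSet (d : ℕ) (Λev : Finset (LatZ d)) : Finset (LatZ d) :=
  Λev ∪ Λev.biUnion fun x => Finset.image (fun p => x + dirv d p) Finset.univ

/-- The gradient Hamiltonian `H_{Λ,ψ}` (only the values of the full configuration `φ`
matter; the boundary condition enters through the extension map below).
The first sum is over ordered nearest-neighbour pairs inside `Λ`, the second over pairs
from `Λ` to its outer boundary. -/
def gibbsH (d : ℕ) (U : ℝ → ℝ) (Λ : Finset (LatZ d)) (φ : LatZ d → ℝ) : ℝ :=
  (∑ p : Fin d × Bool, ∑ x ∈ Λ.filter (fun x => x + dirv d p ∈ Λ),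
      U (φ (x + dirv d p) - φ x))
  + 2 * ∑ p : Fin d × Bool, ∑ x ∈ Λ.filter (fun x => x + dirv d p ∉ Λ),
      U (φ (x + dirv d p) - φ x)

/-- Extension of a configuration on `Λ` by the boundary condition `ψ` outside `Λ`. -/
def extLam (d : ℕ) (Λ : Finset (LatZ d)) (ψ : LatZ d → ℝ) (φ : {x : LatZ d // x ∈ Λ} → ℝ) :
    LatZ d → ℝ :=
  fun x => if h : x ∈ Λ then φ ⟨x, h⟩ else ψ x

/-- Normalising constant `Z_{Λ,ψ}`. -/
def gibbsZ (β : ℝ) (d : ℕ) (U : ℝ → ℝ) (Λ : Finset (LatZ d)) (ψ : LatZ d → ℝ) : ℝ :=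
  ∫ φ : {x : LatZ d // x ∈ Λ} → ℝ, Real.exp (-β * gibbsH d U Λ (extLam d Λ ψ φ))

/-- The finite-volume Gibbs measure `ν_{Λ,ψ}`, a measure on `ℝ^{ℤ^d}`: coordinates
outside `Λ` are fixed to `ψ` and the coordinates in `Λ` have density proportional to
`exp(-β H_{Λ,ψ})`. -/
def gibbsMeasure (β : ℝ) (d : ℕ) (U : ℝ → ℝ) (Λ : Finset (LatZ d)) (ψ : LatZ d → ℝ) :
    Measure (LatZ d → ℝ) :=
  Measure.map (extLam d Λ ψ)
    (volume.withDensity fun φ : {x : LatZ d // x ∈ Λ} → ℝ =>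
      ENNReal.ofReal (Real.exp (-β * gibbsH d U Λ (extLam d Λ ψ φ)) / gibbsZ β d U Λ ψ))

/-- The coarse-grained multi-body potential
`F_x((φ(x+e_i))_{i∈I}) = -log ∫ exp(-2β Σ_{i∈I} U(φ(x+e_i) - t)) dt`. -/
def Fodd (β : ℝ) (d : ℕ) (U : ℝ → ℝ) (φ : LatZ d → ℝ) (x : LatZ d) : ℝ :=
  - Real.log (∫ t : ℝ, Real.exp (-(2*β) * ∑ p : Fin d × Bool, U (φ (x + dirv d p) - t)))

/-- Turn a configuration on the even sites into a full lattice configuration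
(junk value `0` at odd sites; never used below). -/
def fullOf (d : ℕ) (f : Esites d → ℝ) : LatZ d → ℝ :=
  fun y => if h : Even (∑ i, y i) then f ⟨y, h⟩ else 0

/-- Extension of a configuration on `Λ_even` by the boundary condition `ψ` on the
remaining even sites. -/
def extEv (d : ℕ) (Λev : Finset (LatZ d)) (ψ : LatZ d → ℝ)
    (φe : {x : LatZ d // x ∈ Λev} → ℝ) : Esites d → ℝ :=
  fun x => if h : (x : LatZ d) ∈ Λev then φe ⟨x, h⟩ else ψ x

/-- The odd part of the associated set `Λ`. -/
def oddPart (d : ℕ) (Λev : Finset (LatZ d)) : Finset (LatZ d) :=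
  (assocSet d Λev).filter fun x => ¬ Even (∑ i, x i)

/-- Even normalising constant. -/
def evenZ (β : ℝ) (d : ℕ) (U : ℝ → ℝ) (Λev : Finset (LatZ d)) (ψ : LatZ d → ℝ) : ℝ :=
  ∫ φe : {x : LatZ d // x ∈ Λev} → ℝ,
    Real.exp (-(∑ x ∈ oddPart d Λev, Fodd β d U (fullOf d (extEv d Λev ψ φe)) x))

/-- The induced measure on the even-site configurations: coordinates on
`E^d ∖ Λ_even` are fixed to `ψ`, and the coordinates in `Λ_even` have joint density
proportional to `exp(-Σ_{x∈Λ_odd} F_x((φ(x+e_i))_{i∈I}))`. -/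
def evenGibbs (β : ℝ) (d : ℕ) (U : ℝ → ℝ) (Λev : Finset (LatZ d)) (ψ : LatZ d → ℝ) :
    Measure (Esites d → ℝ) :=
  Measure.map (extEv d Λev ψ)
    (volume.withDensity fun φe : {x : LatZ d // x ∈ Λev} → ℝ =>
      ENNReal.ofReal
        (Real.exp (-(∑ x ∈ oddPart d Λev, Fodd β d U (fullOf d (extEv d Λev ψ φe)) x))
          / evenZ β d U Λev ψ))

/-!
Every even site of `Λ` lies in `Λ_even`, so all its neighbours lie in `Λ`: each bond inside
`Λ` joins an even site to an odd one, and each bond leaving `Λ` starts at an odd site.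
Counting the inner bonds from both endpoints and using `U (-s) = U s`, the Hamiltonian is
twice the sum over the odd sites `y ∈ Λ` of the star energies `∑ i, U (φ (y + e_i) - φ y)`.
Given the even spins, the odd spins are therefore independent, and integrating out `φ y`
produces the factor `exp (-F_y)`; the quadratic lower bound on `U` makes these
one-dimensional integrals finite and positive. Splitting `ℝ^Λ = ℝ^{Λ_even} × ℝ^{Λ_odd}` and
applying Tonelli yields both the marginal density and the equality of the normalising
constants.
-/

open scoped ENNReal

namespace MeasureTheory

variable {α β : Type*} [MeasurableSpace α] [MeasurableSpace β]

theorem MeasurePreserving.map_withDensity {μ : Measure α} {ν : Measure β} {e : α ≃ᵐ β}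
    (he : MeasurePreserving e μ ν) (f : α → ℝ≥0∞) :
    (μ.withDensity f).map e = ν.withDensity (f ∘ e.symm) := by
  ext s hs
  rw [e.map_apply, withDensity_apply _ (e.measurable hs), withDensity_apply _ hs,
    ← he.setLIntegral_comp_preimage_emb e.measurableEmbedding]
  simp

theorem Measure.map_fst_withDensity_prod (μ : Measure α) (ν : Measure β) [SFinite μ]
    [SFinite ν] {f : α × β → ℝ≥0∞} (hf : Measurable f) :
    ((μ.prod ν).withDensity f).map Prod.fst
      = μ.withDensity fun a => ∫⁻ b, f (a, b) ∂ν := by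
  ext s hs
  rw [Measure.map_apply measurable_fst hs, withDensity_apply _ (measurable_fst hs),
    withDensity_apply _ hs, ← Set.prod_univ, setLIntegral_prod _ hf.aemeasurable]
  simp

theorem integral_prod_of_nonneg {μ : Measure α} {ν : Measure β} [SFinite μ] [SFinite ν]
    {f : α × β → ℝ} (hf₀ : 0 ≤ f) (hf : AEStronglyMeasurable f (μ.prod ν))
    (hfi : ∀ a, Integrable (fun b => f (a, b)) ν) :
    ∫ z, f z ∂μ.prod ν = ∫ a, ∫ b, f (a, b) ∂ν ∂μ := by
  by_cases h : Integrable f (μ.prod ν)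
  · exact integral_prod f h
  · have h' : ¬ Integrable (fun a => ∫ b, f (a, b) ∂ν) μ := by
      simpa [integrable_prod_iff hf, hfi, Real.norm_of_nonneg (hf₀ _)] using h
    rw [integral_undef h, integral_undef h']

end MeasureTheory

theorem integrable_exp_neg_mul_sum_sub {ι : Type*} [Fintype ι] [Nonempty ι] {U : ℝ → ℝ}
    {c A B : ℝ} (hc : 0 < c) (hU : Continuous U) (hA : 0 < A)
    (hA0 : ∀ η : ℝ, A * η ^ 2 - B ≤ U η) (a : ι → ℝ) :
    Integrable fun t => Real.exp (-c * ∑ i, U (a i - t)) := by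
  obtain ⟨i₀⟩ := ‹Nonempty ι›
  set n : ℝ := (Fintype.card ι : ℝ)
  have hgauss :
      Integrable fun t => Real.exp (c * (n * B)) * Real.exp (-(c * A) * (t - a i₀) ^ 2) :=
    ((integrable_exp_neg_mul_sq (by positivity)).comp_sub_right (a i₀)).const_mul _
  refine hgauss.mono' (by fun_prop) (Eventually.of_forall fun t => ?_)
  rw [Real.norm_of_nonneg (Real.exp_pos _).le, ← Real.exp_add]
  gcongr
  have hsum : A * (a i₀ - t) ^ 2 - n * B ≤ ∑ i, U (a i - t) := calc
    A * (a i₀ - t) ^ 2 - n * B ≤ ∑ i, A * (a i - t) ^ 2 - n * B := by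
      gcongr
      exact Finset.single_le_sum (f := fun i => A * (a i - t) ^ 2) (fun i _ => by positivity)
        (Finset.mem_univ i₀)
    _ = ∑ i, (A * (a i - t) ^ 2 - B) := by simp [Finset.sum_sub_distrib, n]
    _ ≤ ∑ i, U (a i - t) := Finset.sum_le_sum fun i _ => hA0 _
  nlinarith [mul_le_mul_of_nonneg_left hsum hc.le]

section Lattice

variable {d : ℕ}

def flipDir (p : Fin d × Bool) : Fin d × Bool := (p.1, !p.2)

theorem flipDir_involutive : Function.Involutive (flipDir (d := d)) := fun p => by
  simp [flipDir]

theorem dirv_flipDir (p : Fin d × Bool) : dirv d (flipDir p) = -dirv d p := by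
  unfold dirv flipDir
  cases p.2 <;> simp

theorem add_dirv_add_dirv_flipDir (x : LatZ d) (p : Fin d × Bool) :
    x + dirv d p + dirv d (flipDir p) = x := by
  rw [dirv_flipDir]; abel

theorem add_dirv_flipDir_add_dirv (x : LatZ d) (p : Fin d × Bool) :
    x + dirv d (flipDir p) + dirv d p = x := by
  rw [dirv_flipDir]; abel

theorem even_sum_add_dirv_iff (x : LatZ d) (p : Fin d × Bool) :
    Even (∑ i, (x + dirv d p) i) ↔ ¬ Even (∑ i, x i) := by
  have hdirv : ∑ i, dirv d p i = if p.2 then 1 else -1 := by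
    unfold dirv
    split <;> simp
  simp only [Pi.add_apply, Finset.sum_add_distrib, hdirv, Int.even_iff]
  split <;> omega

theorem sum_sum_filter_add_dirv_swap (s t : Finset (LatZ d)) (g : LatZ d → LatZ d → ℝ) :
    ∑ p, ∑ x ∈ s with x + dirv d p ∈ t, g x (x + dirv d p)
      = ∑ p, ∑ y ∈ t with y + dirv d p ∈ s, g (y + dirv d p) y := by
  rw [← Equiv.sum_comp (flipDir_involutive.toPerm _)]
  refine Finset.sum_congr rfl fun p _ => ?_
  rw [Function.Involutive.coe_toPerm]
  refine Finset.sum_nbij' (· + dirv d (flipDir p)) (· + dirv d p) ?_ ?_ ?_ ?_ ?_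
  all_goals
    intro x hx
    simp_all [add_dirv_add_dirv_flipDir, add_dirv_flipDir_add_dirv]

end Lattice

section Continuity

variable {d : ℕ}

@[fun_prop]
theorem continuous_extLam (Λ : Finset (LatZ d)) (ψ : LatZ d → ℝ) :
    Continuous (extLam d Λ ψ) :=
  continuous_pi fun x => by
    by_cases h : x ∈ Λ <;> simp only [extLam, h, dite_true, dite_false] <;> fun_prop

@[fun_prop]
theorem continuous_extEv (Λev : Finset (LatZ d)) (ψ : LatZ d → ℝ) :
    Continuous (extEv d Λev ψ) :=
  continuous_pi fun x => by
    by_cases h : (x : LatZ d) ∈ Λev <;> simp only [extEv, h, dite_true, dite_false] <;> fun_prop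

@[fun_prop]
theorem continuous_gibbsH {U : ℝ → ℝ} (hU : Continuous U) (Λ : Finset (LatZ d)) :
    Continuous (gibbsH d U Λ) := by
  unfold gibbsH
  fun_prop

end Continuity

theorem gibbsH_eq_sum_sum_ite_mul {d : ℕ} (U : ℝ → ℝ) (Λ : Finset (LatZ d))
    (w : LatZ d → ℝ) :
    gibbsH d U Λ w = ∑ p, ∑ x ∈ Λ,
      (if x + dirv d p ∈ Λ then 1 else 2) * U (w (x + dirv d p) - w x) := by
  rw [gibbsH, Finset.mul_sum, ← Finset.sum_add_distrib]
  refine Finset.sum_congr rfl fun p _ => ?_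
  rw [Finset.sum_filter, Finset.sum_filter, Finset.mul_sum, ← Finset.sum_add_distrib]
  refine Finset.sum_congr rfl fun x _ => ?_
  split_ifs <;> ring

section AssociatedSet

variable {d : ℕ} {Λev : Finset (LatZ d)}

theorem subset_assocSet : Λev ⊆ assocSet d Λev := Finset.subset_union_left

theorem mem_assocSet {x : LatZ d} :
    x ∈ assocSet d Λev ↔ x ∈ Λev ∨ ∃ z ∈ Λev, ∃ p, z + dirv d p = x := by
  simp [assocSet]

theorem mem_oddPart {x : LatZ d} :
    x ∈ oddPart d Λev ↔ x ∈ assocSet d Λev ∧ ¬ Even (∑ i, x i) :=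
  Finset.mem_filter

theorem add_dirv_mem_assocSet {x : LatZ d} (hx : x ∈ Λev) (p : Fin d × Bool) :
    x + dirv d p ∈ assocSet d Λev :=
  mem_assocSet.2 (Or.inr ⟨x, hx, p, rfl⟩)

variable (hΛev : ∀ x ∈ Λev, Even (∑ i, x i))
include hΛev

theorem mem_of_mem_assocSet_of_even {x : LatZ d} (hx : x ∈ assocSet d Λev)
    (he : Even (∑ i, x i)) : x ∈ Λev := by
  rcases mem_assocSet.1 hx with hx | ⟨z, hz, p, rfl⟩
  · exact hx
  · exact absurd (hΛev z hz) ((even_sum_add_dirv_iff z p).1 he)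

theorem mem_assocSet_and_even_iff {x : LatZ d} :
    x ∈ assocSet d Λev ∧ Even (∑ i, x i) ↔ x ∈ Λev :=
  ⟨fun h => mem_of_mem_assocSet_of_even hΛev h.1 h.2,
    fun h => ⟨subset_assocSet h, hΛev x h⟩⟩

theorem sum_assocSet (f : LatZ d → ℝ) :
    ∑ x ∈ assocSet d Λev, f x = ∑ x ∈ Λev, f x + ∑ y ∈ oddPart d Λev, f y := by
  rw [← Finset.sum_filter_add_sum_filter_not _ (fun x => Even (∑ i, x i))]
  congr 2
  ext x
  rw [Finset.mem_filter, mem_assocSet_and_even_iff hΛev]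

theorem add_dirv_mem_oddPart {x : LatZ d} (hx : x ∈ Λev) (p : Fin d × Bool) :
    x + dirv d p ∈ oddPart d Λev :=
  mem_oddPart.2 ⟨add_dirv_mem_assocSet hx p,
    (even_sum_add_dirv_iff x p).not.2 (not_not.2 (hΛev x hx))⟩

theorem add_dirv_mem_assocSet_iff_of_mem_oddPart {y : LatZ d} (hy : y ∈ oddPart d Λev)
    (p : Fin d × Bool) : y + dirv d p ∈ assocSet d Λev ↔ y + dirv d p ∈ Λev :=
  ⟨fun h => mem_of_mem_assocSet_of_even hΛev h
    ((even_sum_add_dirv_iff y p).2 (mem_oddPart.1 hy).2), fun h => subset_assocSet h⟩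

theorem sum_even_bonds_eq_sum_odd_bonds {U : ℝ → ℝ} (hsym : ∀ s, U (-s) = U s)
    (w : LatZ d → ℝ) :
    ∑ p, ∑ x ∈ Λev, U (w (x + dirv d p) - w x)
      = ∑ p, ∑ y ∈ oddPart d Λev,
          if y + dirv d p ∈ assocSet d Λev then U (w (y + dirv d p) - w y) else 0 := calc
  _ = ∑ p, ∑ x ∈ Λev with x + dirv d p ∈ oddPart d Λev, U (w (x + dirv d p) - w x) := by
      simp_rw [Finset.filter_true_of_mem fun x hx => add_dirv_mem_oddPart hΛev hx _]
  _ = ∑ p, ∑ y ∈ oddPart d Λev with y + dirv d p ∈ Λev, U (w y - w (y + dirv d p)) :=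
      sum_sum_filter_add_dirv_swap _ _ fun x y => U (w y - w x)
  _ = _ := by
      refine Finset.sum_congr rfl fun p _ => ?_
      rw [Finset.sum_filter]
      refine Finset.sum_congr rfl fun y hy => ?_
      rw [← hsym, neg_sub]
      exact if_congr (add_dirv_mem_assocSet_iff_of_mem_oddPart hΛev hy p).symm rfl rfl

theorem gibbsH_assocSet {U : ℝ → ℝ} (hsym : ∀ s, U (-s) = U s) (w : LatZ d → ℝ) :
    gibbsH d U (assocSet d Λev) w
      = 2 * ∑ y ∈ oddPart d Λev, ∑ p, U (w (y + dirv d p) - w y) := by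
  set Λ := assocSet d Λev
  calc gibbsH d U Λ w
      = ∑ p, (∑ x ∈ Λev, U (w (x + dirv d p) - w x) + ∑ y ∈ oddPart d Λev,
          (if y + dirv d p ∈ Λ then 1 else 2) * U (w (y + dirv d p) - w y)) := by
        rw [gibbsH_eq_sum_sum_ite_mul]
        refine Finset.sum_congr rfl fun p _ => ?_
        rw [sum_assocSet hΛev]
        congr 1
        exact Finset.sum_congr rfl fun x hx => by rw [if_pos (add_dirv_mem_assocSet hx p), one_mul]
    _ = ∑ p, ∑ y ∈ oddPart d Λev, 2 * U (w (y + dirv d p) - w y) := by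
        rw [Finset.sum_add_distrib, sum_even_bonds_eq_sum_odd_bonds hΛev hsym,
          ← Finset.sum_add_distrib]
        refine Finset.sum_congr rfl fun p _ => ?_
        rw [← Finset.sum_add_distrib]
        refine Finset.sum_congr rfl fun y _ => ?_
        split_ifs <;> ring
    _ = _ := by
        rw [Finset.mul_sum, Finset.sum_comm]
        simp_rw [Finset.mul_sum]

end AssociatedSet

section CoarseGraining

variable {d : ℕ}

def oddWeight (β : ℝ) (U : ℝ → ℝ) (g : LatZ d → ℝ) (y : LatZ d) (t : ℝ) : ℝ :=
  Real.exp (-(2 * β) * ∑ p, U (g (y + dirv d p) - t))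

variable {β A B : ℝ} {U : ℝ → ℝ} (hd : 1 ≤ d) (hβ : 0 < β) (hU : Continuous U)
  (hA : 0 < A) (hA0 : ∀ η : ℝ, A * η ^ 2 - B ≤ U η)
include hd hβ hU hA hA0

theorem integrable_oddWeight (g : LatZ d → ℝ) (y : LatZ d) :
    Integrable (oddWeight β U g y) :=
  have : Nonempty (Fin d × Bool) := ⟨(⟨0, hd⟩, true)⟩
  integrable_exp_neg_mul_sum_sub (by positivity) hU hA hA0 _

theorem exp_neg_Fodd (g : LatZ d → ℝ) (y : LatZ d) :
    Real.exp (-Fodd β d U g y) = ∫ t, oddWeight β U g y t := by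
  rw [Fodd, neg_neg, Real.exp_log (integral_exp_pos (integrable_oddWeight hd hβ hU hA hA0 g y))]
  rfl

end CoarseGraining

section EvenOddSplit

variable {d : ℕ} {Λev : Finset (LatZ d)} (hΛev : ∀ x ∈ Λev, Even (∑ i, x i))

def evenSitesEquiv :
    {y : {x // x ∈ assocSet d Λev} // Even (∑ i, y.1 i)} ≃ {x // x ∈ Λev} :=
  (Equiv.subtypeSubtypeEquivSubtypeInter (· ∈ assocSet d Λev) _).trans
    (Equiv.subtypeEquivRight fun _ => mem_assocSet_and_even_iff hΛev)

def oddSitesEquiv :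
    {y : {x // x ∈ assocSet d Λev} // ¬ Even (∑ i, y.1 i)} ≃ {x // x ∈ oddPart d Λev} :=
  (Equiv.subtypeSubtypeEquivSubtypeInter (· ∈ assocSet d Λev)
      fun x => ¬ Even (∑ i, x i)).trans
    (Equiv.subtypeEquivRight fun _ => mem_oddPart.symm)

def evenOddSplit :
    ({x // x ∈ assocSet d Λev} → ℝ)
      ≃ᵐ ({x // x ∈ Λev} → ℝ) × ({x // x ∈ oddPart d Λev} → ℝ) :=
  (MeasurableEquiv.piEquivPiSubtypeProd (fun _ => ℝ) fun x => Even (∑ i, x.1 i)).trans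
    ((MeasurableEquiv.arrowCongr' (evenSitesEquiv hΛev) (.refl ℝ)).prodCongr
      (MeasurableEquiv.arrowCongr' oddSitesEquiv (.refl ℝ)))

theorem measurePreserving_evenOddSplit : MeasurePreserving (evenOddSplit hΛev) :=
  ((volume_preserving_arrowCongr' _ _ (.id _)).prod
    (volume_preserving_arrowCongr' _ _ (.id _))).comp
    (volume_preserving_piEquivPiSubtypeProd _ _)

theorem extLam_assocSet_of_even (ψ : LatZ d → ℝ) (φ : {x // x ∈ assocSet d Λev} → ℝ)
    {z : LatZ d} (hz : Even (∑ i, z i)) :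
    extLam d (assocSet d Λev) ψ φ z = extEv d Λev ψ (evenOddSplit hΛev φ).1 ⟨z, hz⟩ := by
  by_cases h : z ∈ Λev
  · simp only [extLam, extEv, subset_assocSet h, h, dite_true]
    rfl
  · have h' : z ∉ assocSet d Λev := fun h' => h (mem_of_mem_assocSet_of_even hΛev h' hz)
    simp [extLam, extEv, h, h']

end EvenOddSplit

section Marginal

variable {d : ℕ} {β A B : ℝ} {U : ℝ → ℝ} {Λev : Finset (LatZ d)}
  (hΛev : ∀ x ∈ Λev, Even (∑ i, x i))

theorem exp_neg_gibbsH_assocSet (hsym : ∀ s, U (-s) = U s) (ψ : LatZ d → ℝ)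
    (φ : {x // x ∈ assocSet d Λev} → ℝ) :
    Real.exp (-β * gibbsH d U (assocSet d Λev) (extLam d (assocSet d Λev) ψ φ))
      = ∏ y : {x // x ∈ oddPart d Λev},
          oddWeight β U (fullOf d (extEv d Λev ψ (evenOddSplit hΛev φ).1)) y
            ((evenOddSplit hΛev φ).2 y) := by
  rw [gibbsH_assocSet hΛev hsym, ← Finset.sum_coe_sort, Finset.mul_sum, Finset.mul_sum,
    Real.exp_sum]
  refine Finset.prod_congr rfl fun y _ => ?_
  have hy := mem_oddPart.1 y.2
  have hnbr : ∀ p, extLam d (assocSet d Λev) ψ φ (y + dirv d p)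
      = fullOf d (extEv d Λev ψ (evenOddSplit hΛev φ).1) (y + dirv d p) := fun p => by
    have he := (even_sum_add_dirv_iff (y : LatZ d) p).2 hy.2
    rw [extLam_assocSet_of_even hΛev ψ φ he, fullOf, dif_pos he]
  have hcentre : extLam d (assocSet d Λev) ψ φ y = (evenOddSplit hΛev φ).2 y := dif_pos hy.1
  simp only [oddWeight, hnbr, hcentre]
  congr 1
  ring

variable (hd : 1 ≤ d) (hβ : 0 < β) (hU : Continuous U) (hsym : ∀ s, U (-s) = U s)
  (hA : 0 < A) (hA0 : ∀ η : ℝ, A * η ^ 2 - B ≤ U η) (ψ : LatZ d → ℝ)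
include hd hβ hU hsym hA hA0

theorem integrable_exp_neg_gibbsH_evenOddSplit_symm (a : {x // x ∈ Λev} → ℝ) :
    Integrable fun b => Real.exp (-β * gibbsH d U (assocSet d Λev)
      (extLam d (assocSet d Λev) ψ ((evenOddSplit hΛev).symm (a, b)))) := by
  simp_rw [exp_neg_gibbsH_assocSet hΛev hsym, MeasurableEquiv.apply_symm_apply]
  exact Integrable.fintype_prod fun y => integrable_oddWeight hd hβ hU hA hA0 _ _

theorem integral_exp_neg_gibbsH_evenOddSplit_symm (a : {x // x ∈ Λev} → ℝ) :
    ∫ b, Real.exp (-β * gibbsH d U (assocSet d Λev)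
        (extLam d (assocSet d Λev) ψ ((evenOddSplit hΛev).symm (a, b))))
      = Real.exp (-∑ x ∈ oddPart d Λev, Fodd β d U (fullOf d (extEv d Λev ψ a)) x) := by
  simp_rw [exp_neg_gibbsH_assocSet hΛev hsym, MeasurableEquiv.apply_symm_apply]
  refine (integral_fintype_prod_eq_prod (μ := fun _ => volume) _).trans ?_
  rw [← Finset.sum_coe_sort, ← Finset.sum_neg_distrib, Real.exp_sum]
  simp_rw [exp_neg_Fodd hd hβ hU hA hA0]

end Marginal

section GibbsMeasure

variable {d : ℕ} {β A B : ℝ} {U : ℝ → ℝ} {Λev : Finset (LatZ d)}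
  (hΛev : ∀ x ∈ Λev, Even (∑ i, x i)) (hd : 1 ≤ d) (hβ : 0 < β) (hU : Continuous U)
  (hsym : ∀ s, U (-s) = U s) (hA : 0 < A) (hA0 : ∀ η : ℝ, A * η ^ 2 - B ≤ U η)
  (ψ : LatZ d → ℝ)
include hΛev hd hβ hU hsym hA hA0

theorem gibbsZ_assocSet : gibbsZ β d U (assocSet d Λev) ψ = evenZ β d U Λev ψ := by
  rw [gibbsZ, ← ((measurePreserving_evenOddSplit hΛev).symm _).integral_comp',
    Measure.volume_eq_prod, integral_prod_of_nonneg (fun _ => (Real.exp_pos _).le)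
      (by fun_prop) (integrable_exp_neg_gibbsH_evenOddSplit_symm hΛev hd hβ hU hsym hA hA0 ψ)]
  simp_rw [integral_exp_neg_gibbsH_evenOddSplit_symm hΛev hd hβ hU hsym hA hA0 ψ]
  rfl

theorem map_fst_evenOddSplit_gibbs :
    (volume.withDensity fun φ => ENNReal.ofReal
        (Real.exp (-β * gibbsH d U (assocSet d Λev) (extLam d (assocSet d Λev) ψ φ))
          / gibbsZ β d U (assocSet d Λev) ψ)).map (Prod.fst ∘ evenOddSplit hΛev)
      = volume.withDensity fun a => ENNReal.ofReal
          (Real.exp (-(∑ x ∈ oddPart d Λev, Fodd β d U (fullOf d (extEv d Λev ψ a)) x))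
            / evenZ β d U Λev ψ) := by
  have he := measurePreserving_evenOddSplit hΛev
  have hZ : 0 ≤ gibbsZ β d U (assocSet d Λev) ψ := integral_nonneg fun _ => (Real.exp_pos _).le
  rw [← Measure.map_map measurable_fst he.measurable, he.map_withDensity, Measure.volume_eq_prod,
    Measure.map_fst_withDensity_prod _ _ (by fun_prop)]
  congr with a
  rw [Function.comp_def, ← ofReal_integral_eq_lintegral_ofReal
      ((integrable_exp_neg_gibbsH_evenOddSplit_symm hΛev hd hβ hU hsym hA hA0 ψ a).div_const _)
      (Eventually.of_forall fun _ => div_nonneg (Real.exp_pos _).le hZ),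
    integral_div, integral_exp_neg_gibbsH_evenOddSplit_symm hΛev hd hβ hU hsym hA hA0 ψ,
    gibbsZ_assocSet hΛev hd hβ hU hsym hA hA0 ψ]

end GibbsMeasure

/-- Lemma `nuodd`: the restriction of the finite-volume Gibbs measure
to the even sites is the Gibbs measure with the coarse-grained Hamiltonian. -/
theorem statement4
    {d : ℕ} {β A B : ℝ} {U : ℝ → ℝ}
    (hd : 1 ≤ d) (hβ : 0 < β)
    (hUcont : Continuous U) (hsym : ∀ s, U (-s) = U s)
    (hA : 0 < A) (hA0 : ∀ η : ℝ, A * η ^ 2 - B ≤ U η)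
    (Λev : Finset (LatZ d)) (hΛev : ∀ x ∈ Λev, Even (∑ i, x i))
    (ψ : LatZ d → ℝ) :
    Measure.map (fun φ : LatZ d → ℝ => fun x : Esites d => φ (x : LatZ d))
        (gibbsMeasure β d U (assocSet d Λev) ψ)
      = evenGibbs β d U Λev ψ := by
  have hrestrict :
      (fun φ : LatZ d → ℝ => fun x : Esites d => φ x) ∘ extLam d (assocSet d Λev) ψ
        = extEv d Λev ψ ∘ Prod.fst ∘ evenOddSplit hΛev := by
    funext φ x
    exact extLam_assocSet_of_even hΛev ψ φ x.2
  rw [gibbsMeasure, evenGibbs, Measure.map_map (by fun_prop) (by fun_prop), hrestrict,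
    ← Measure.map_map (by fun_prop) (by fun_prop),
    map_fst_evenOddSplit_gibbs hΛev hd hβ hUcont hsym hA hA0 ψ]

end
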